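/- Let x be an α-substitutive sequence over a finite alphabet C and let u be a non-empty word over C. Then the characteristic sequence t ∈ {0,1}^ℕ of the occurrences of u in x, defined by t_i = 1 if x_i x_{i+1} ⋯ x_{i+|u|−1} = u and t_i = 0 otherwise, is α-substitutive. -/

import Mathlib

open Filter Topology
open scoped Classical

namespace Cobham

def applyWord {A B : Type*} (σ : A → List B) (w : List A) : List B := w.flatMap σ

def iterWord {A : Type*} (σ : A → List A) (n : ℕ) (w : List A) : List A :=
  (applyWord σ)^[n] w

def lengthIter {A : Type*} (σ : A → List A) (n : ℕ) (a : A) : ℕ :=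
  (iterWord σ n [a]).length

def IsSubstitution {A : Type*} (σ : A → List A) : Prop :=
  ∀ a : A, Tendsto (fun n => lengthIter σ n a) atTop atTop

def IsPrefixOfSeq {A : Type*} (w : List A) (x : ℕ → A) : Prop :=
  ∀ i : Fin w.length, w.get i = x i

def seqTake {A : Type*} (x : ℕ → A) (n : ℕ) : List A := List.ofFn (fun i : Fin n => x i)

def IsFixedPoint {A : Type*} (σ : A → List A) (x : ℕ → A) : Prop :=
  ∀ n : ℕ, IsPrefixOfSeq (applyWord σ (seqTake x n)) x

def IsProperFixedPoint {A : Type*} (σ : A → List A) (x : ℕ → A) : Prop :=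
  IsFixedPoint σ x ∧ ∀ a : A, ∃ i : ℕ, x i = a

def incidenceMatrix {A : Type*} [DecidableEq A] (σ : A → List A) : Matrix A A ℝ :=
  fun i j => ((σ j).count i : ℝ)

def IsPrimitiveMatrix {A : Type*} [Fintype A] [DecidableEq A] (M : Matrix A A ℝ) : Prop :=
  ∃ n : ℕ, 0 < n ∧ ∀ i j, 0 < (M ^ n) i j

def IsDominantEigenvalue {A : Type*} [Fintype A] [DecidableEq A] (M : Matrix A A ℝ) (α : ℝ) : Prop :=
  0 ≤ α ∧ Module.End.HasEigenvalue (Matrix.toLin' M) α ∧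
    ∀ μ : ℂ, Module.End.HasEigenvalue (Matrix.toLin' (M.map Complex.ofReal)) μ → ‖μ‖ ≤ α

def IsPerron (α : ℝ) : Prop :=
  IsIntegral ℤ α ∧ 1 ≤ α ∧
    ∀ μ : ℂ, Polynomial.aeval μ (minpoly ℤ α) = 0 → μ ≠ (α : ℂ) → ‖μ‖ < α

def MultIndep (α β : ℝ) : Prop :=
  ∀ k l : ℕ, 0 < k → 0 < l → α ^ k ≠ β ^ l

def IsUltimatelyPeriodic {C : Type*} (x : ℕ → C) : Prop :=
  ∃ p : ℕ, 0 < p ∧ ∃ N : ℕ, ∀ n : ℕ, N ≤ n → x (n + p) = x n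

def IsPeriodic {C : Type*} (x : ℕ → C) : Prop :=
  ∃ p : ℕ, 0 < p ∧ ∀ n : ℕ, x (n + p) = x n

def OccursAt {C : Type*} (w : List C) (x : ℕ → C) (i : ℕ) : Prop :=
  ∀ j : Fin w.length, w.get j = x (i + j)

def OccursInfinitely {C : Type*} (w : List C) (x : ℕ → C) : Prop :=
  ∀ N : ℕ, ∃ i : ℕ, N ≤ i ∧ OccursAt w x i

def BoundedGaps {C : Type*} (w : List C) (x : ℕ → C) : Prop :=
  ∃ g : ℕ, ∀ N : ℕ, ∃ i : ℕ, N ≤ i ∧ i < N + g ∧ OccursAt w x i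

def InLanguage {C : Type*} (w : List C) (x : ℕ → C) : Prop := ∃ i : ℕ, OccursAt w x i

def IsSubstitutiveSeq {C : Type*} (α : ℝ) (x : ℕ → C) : Prop :=
  ∃ (B : Type) (_ : Fintype B) (_ : DecidableEq B) (σ : B → List B) (y : ℕ → B) (φ : B → C),
    IsSubstitution σ ∧ IsProperFixedPoint σ y ∧
      IsDominantEigenvalue (incidenceMatrix σ) α ∧ x = φ ∘ y

def IsPrimitiveSubstitutiveSeq {C : Type*} (α : ℝ) (x : ℕ → C) : Prop :=
  ∃ (B : Type) (_ : Fintype B) (_ : DecidableEq B) (σ : B → List B) (y : ℕ → B) (φ : B → C),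
    IsSubstitution σ ∧ IsPrimitiveMatrix (incidenceMatrix σ) ∧ IsProperFixedPoint σ y ∧
      IsDominantEigenvalue (incidenceMatrix σ) α ∧ x = φ ∘ y

def HasGrowthTypeWith {A : Type*} (σ : A → List A) (a : A) (d : ℕ) (θ : ℝ) (c : ℝ) : Prop :=
  0 < c ∧ 1 ≤ θ ∧
    Tendsto (fun n : ℕ => (lengthIter σ n a : ℝ) / (c * (n : ℝ) ^ d * θ ^ n)) atTop (𝓝 1)

def HasGrowthType {A : Type*} (σ : A → List A) (a : A) (d : ℕ) (θ : ℝ) : Prop :=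
  ∃ c : ℝ, HasGrowthTypeWith σ a d θ c

noncomputable def lambdaSum {A : Type*} (d : A → ℕ) (θ c : A → ℝ) (Θ : ℝ) (D : ℕ)
    (u : List A) : ℝ :=
  (u.map (fun b => if θ b = Θ ∧ d b = D then c b else 0)).sum

def restrictSub {A : Type*} {l : ℕ} (σ : A → List A) (part : A → Fin l) (i : Fin l) :
    {a : A // part a = i} → List {a : A // part a = i} :=
  fun a => (σ a.1).filterMap (fun b => if h : part b = i then some ⟨b, h⟩ else none)

def subMatrix {A : Type*} (M : Matrix A A ℝ) (P : A → Prop) :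
    Matrix {a : A // P a} {a : A // P a} ℝ := fun a b => M a.1 b.1

def SatisfiesC {A : Type*} [DecidableEq A] (σ : A → List A) (l q : ℕ)
    (part : A → Fin l) : Prop :=
  q < l ∧ Function.Surjective part ∧
  (∀ a b : A, a ∈ σ b → part a = part b ∨
      ((part b : ℕ) < q ∧ (part b : ℕ) < (part a : ℕ))) ∧
  (∀ i : Fin l, (i : ℕ) < q →
      (∀ a b : A, part a = i → part b = i → (σ b).count a = 0) ∨
      (∀ a b : A, part a = i → part b = i → 0 < (σ b).count a)) ∧
  (∀ i : Fin l, q ≤ (i : ℕ) → ∀ a b : A, part a = i → part b = i → 0 < (σ b).count a) ∧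
  (∀ i : Fin l, (i : ℕ) < q →
      ∃ j : Fin l, (i : ℕ) < (j : ℕ) ∧ ∃ a b : A, part a = j ∧ part b = i ∧ a ∈ σ b) ∧
  (∀ i : Fin l, (∃ a b : A, part a = i ∧ part b = i ∧ 0 < (σ b).count a) →
      ∃ (a : A) (u : List A), part a = i ∧
        (σ a).filter (fun b => decide (part b = i)) = a :: u ∧
        (u = [] ↔ ((∀ b : A, part b = i → b = a) ∧ (σ a).count a = 1)))

def IsGoodSubstitution {A : Type*} [Fintype A] [DecidableEq A] (σ : A → List A) (α : ℝ) : Prop :=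
  IsSubstitution σ ∧ IsDominantEigenvalue (incidenceMatrix σ) α ∧
    ∃ (l q : ℕ) (part : A → Fin l), SatisfiesC σ l q part ∧
      ∃ i : Fin l, q ≤ (i : ℕ) ∧
        IsDominantEigenvalue (incidenceMatrix (restrictSub σ part i)) α

/-!
Let `y` be a proper fixed point of `σ` with `x = φ ∘ y`, and let `k = |u|`. Recode `y` by its
sliding windows: over the alphabet of length-`k` factors of `y`, the sequence
`i ↦ y_i ⋯ y_{i+k-1}` is a fixed point of the substitution sending `y_i ⋯ y_{i+k-1}` to the
`|σ(y_i)|` factors of `y` that start inside the image of `y_i`. This is well defined because the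
image of the factor already contains all of them. Taking the first letter of a factor
intertwines the two substitutions, so iterates have the same lengths. Pulling back a left
eigenvector shows that `α` is still an eigenvalue, and by Gelfand's formula the lengths grow at
most like `(α + ε)^n`, which bounds every eigenvalue of the new incidence matrix by `α`. The
occurrences of `u` are then read off by a letter-to-letter map.
-/

open scoped Matrix

section Words

variable {A : Type*} (σ : A → List A)

theorem applyWord_append (l r : List A) :
    applyWord σ (l ++ r) = applyWord σ l ++ applyWord σ r :=
  List.flatMap_append

theorem applyWord_singleton (a : A) : applyWord σ [a] = σ a :=
  List.flatMap_singleton _ _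

theorem iterWord_succ (n : ℕ) (l : List A) :
    iterWord σ (n + 1) l = applyWord σ (iterWord σ n l) :=
  Function.iterate_succ_apply' _ _ _

theorem iterWord_succ_singleton (n : ℕ) (a : A) :
    iterWord σ (n + 1) [a] = iterWord σ n (σ a) := by
  rw [iterWord, Function.iterate_succ_apply, applyWord_singleton]; rfl

theorem IsSubstitution.ne_nil {σ : A → List A} (hσ : IsSubstitution σ) (a : A) :
    σ a ≠ [] := by
  intro ha
  obtain ⟨N, hN⟩ := ((hσ a).eventually_ge_atTop 1).exists_forall_of_atTop
  have hnil : iterWord σ (N + 1) [a] = [] := by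
    rw [iterWord_succ_singleton, ha, iterWord, Function.iterate_fixed rfl]
  have := hN (N + 1) N.le_succ
  simp [lengthIter, hnil] at this

theorem length_le_length_applyWord {σ : A → List A} (hne : ∀ a, σ a ≠ []) (l : List A) :
    l.length ≤ (applyWord σ l).length := by
  induction l with
  | nil => simp
  | cons a l ih =>
    have := List.length_pos_iff.mpr (hne a)
    simp only [applyWord, List.flatMap_cons, List.length_append, List.length_cons] at ih ⊢
    omega

theorem sum_map_flatMap {α β M : Type*} [AddCommMonoid M] (l : List α) (f : α → List β)
    (v : β → M) : ((l.flatMap f).map v).sum = (l.map fun a => ((f a).map v).sum).sum := by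
  induction l <;> simp_all

end Words

section Incidence

variable {A : Type*} [Fintype A] [DecidableEq A] (σ : A → List A)

theorem sum_map_eq_sum_mul_count {R : Type*} [CommSemiring R] (l : List A) (v : A → R) :
    (l.map v).sum = ∑ a, v a * l.count a := by
  rw [Finset.sum_list_map_count]
  refine Finset.sum_subset (Finset.subset_univ _) (fun a _ ha => ?_) |>.trans ?_
  · rw [List.count_eq_zero_of_not_mem (by simpa using ha), zero_smul]
  · simp [mul_comm]

theorem vecMul_map_incidenceMatrix {R : Type*} [CommSemiring R] (f : ℝ →+* R) (v : A → R)
    (a : A) : (v ᵥ* (incidenceMatrix σ).map f) a = ((σ a).map v).sum := by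
  simp [sum_map_eq_sum_mul_count, Matrix.vecMul, dotProduct, incidenceMatrix]

theorem vecMul_incidenceMatrix (v : A → ℝ) (a : A) :
    (v ᵥ* incidenceMatrix σ) a = ((σ a).map v).sum :=
  vecMul_map_incidenceMatrix σ (RingHom.id ℝ) v a

theorem vecMul_map_pow_incidenceMatrix (v : A → ℂ) (n : ℕ) (a : A) :
    (v ᵥ* (incidenceMatrix σ).map Complex.ofReal ^ n) a = ((iterWord σ n [a]).map v).sum := by
  induction n generalizing v with
  | zero => simp [iterWord]
  | succ n ih =>
    rw [pow_succ', ← Matrix.vecMul_vecMul, ih, iterWord_succ, applyWord, sum_map_flatMap]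
    exact congrArg List.sum (List.map_congr_left fun b _ =>
      vecMul_map_incidenceMatrix σ Complex.ofRealHom v b)

end Incidence

section Spectrum

variable {n : Type*} [Fintype n] [DecidableEq n]

theorem spectrum_transpose {R : Type*} [CommRing R] (A : Matrix n n R) :
    spectrum R Aᵀ = spectrum R A := by
  ext μ
  rw [spectrum.mem_iff, spectrum.mem_iff, ← Matrix.isUnit_transpose, Matrix.transpose_sub,
    Matrix.transpose_transpose, Algebra.algebraMap_eq_smul_one, Matrix.transpose_smul,
    Matrix.transpose_one]

theorem hasEigenvalue_toLin'_iff_exists_vecMul {K : Type*} [Field K] (A : Matrix n n K) (μ : K) :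
    Module.End.HasEigenvalue (Matrix.toLin' A) μ ↔ ∃ v, v ≠ 0 ∧ v ᵥ* A = μ • v := by
  rw [Module.End.hasEigenvalue_iff_mem_spectrum, Matrix.spectrum_toLin', ← spectrum_transpose,
    ← Matrix.spectrum_toLin', ← Module.End.hasEigenvalue_iff_mem_spectrum]
  constructor
  · intro h
    obtain ⟨v, hv⟩ := h.exists_hasEigenvector
    rw [Module.End.hasEigenvector_iff] at hv
    exact ⟨v, hv.2, by simpa [Matrix.mulVec_transpose] using hv.1⟩
  · rintro ⟨v, hv0, hv⟩
    exact Module.End.hasEigenvalue_of_hasEigenvector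
      (Module.End.hasEigenvector_iff.mpr ⟨by simpa [Matrix.mulVec_transpose] using hv, hv0⟩)

theorem vecMul_pow_eq_pow_smul {n K : Type*} [Fintype n] [DecidableEq n] [CommSemiring K]
    {M : Matrix n n K} {v : n → K} {μ : K} (hv : v ᵥ* M = μ • v) (k : ℕ) :
    v ᵥ* M ^ k = μ ^ k • v := by
  induction k with
  | zero => simp
  | succ k ih =>
    rw [pow_succ, ← Matrix.vecMul_vecMul, ih, Matrix.smul_vecMul, hv, smul_smul, pow_succ]

end Spectrum

section Growth

attribute [local instance] Matrix.linftyOpNormedRing Matrix.linftyOpNormedAlgebra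

theorem norm_apply_le_linfty_opNorm {n : Type*} [Fintype n] [DecidableEq n]
    (M : Matrix n n ℂ) (i j : n) : ‖M i j‖ ≤ ‖M‖ :=
  calc ‖M i j‖ = ‖(M *ᵥ Pi.single j 1) i‖ := by
        simp [Matrix.mulVec, dotProduct, Pi.single_apply]
    _ ≤ ‖M *ᵥ Pi.single j 1‖ := norm_le_pi_norm _ i
    _ ≤ ‖M‖ * ‖(Pi.single j 1 : n → ℂ)‖ := Matrix.linfty_opNorm_mulVec _ _
    _ = ‖M‖ := by rw [Pi.norm_single, norm_one, mul_one]

theorem norm_sum_map_le {ι E : Type*} [Fintype ι] [SeminormedAddCommGroup E] (v : ι → E)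
    (l : List ι) : ‖(l.map v).sum‖ ≤ l.length * ‖v‖ := by
  induction l with
  | nil => simp
  | cons a l ih =>
    simp only [List.map_cons, List.sum_cons, List.length_cons, Nat.cast_succ]
    linarith [norm_add_le (v a) (l.map v).sum, norm_le_pi_norm v a]

theorem le_of_eventually_pow_le_mul_pow {r s C : ℝ} (hs : 0 < s)
    (h : ∀ᶠ n : ℕ in atTop, r ^ n ≤ C * s ^ n) : r ≤ s := by
  by_contra! hsr
  have hgrow : Tendsto (fun n : ℕ => (r / s) ^ n) atTop atTop :=
    tendsto_pow_atTop_atTop_of_one_lt ((one_lt_div hs).mpr hsr)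
  obtain ⟨n, hn, hCn⟩ := (h.and (hgrow.eventually_gt_atTop C)).exists
  rw [div_pow, lt_div_iff₀ (pow_pos hs n)] at hCn
  linarith

variable {A : Type*} [Fintype A] [DecidableEq A] {σ : A → List A}

theorem eventually_lengthIter_le {α ε : ℝ} (hα : 0 ≤ α) (hε : 0 < ε)
    (hspec : ∀ μ : ℂ, Module.End.HasEigenvalue
      (Matrix.toLin' ((incidenceMatrix σ).map Complex.ofReal)) μ → ‖μ‖ ≤ α) :
    ∀ᶠ n in atTop, ∀ a, (lengthIter σ n a : ℝ) ≤ Fintype.card A * (α + ε) ^ n := by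
  set M := (incidenceMatrix σ).map Complex.ofReal
  have hrad : spectralRadius ℂ M < ENNReal.ofReal (α + ε) := by
    refine lt_of_le_of_lt (iSup₂_le fun μ hμ => ?_)
      ((ENNReal.ofReal_lt_ofReal_iff (by linarith)).2 (lt_add_of_pos_right α hε))
    rw [← Matrix.spectrum_toLin', ← Module.End.hasEigenvalue_iff_mem_spectrum] at hμ
    rw [← enorm_eq_nnnorm, ← ofReal_norm]
    exact ENNReal.ofReal_le_ofReal (hspec μ hμ)
  have hgelfand := spectrum.pow_norm_pow_one_div_tendsto_nhds_spectralRadius M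
  filter_upwards [hgelfand.eventually_lt_const hrad, eventually_ge_atTop 1] with n hn hn1 a
  have hnorm : ‖M ^ n‖ ≤ (α + ε) ^ n := by
    rw [ENNReal.ofReal_lt_ofReal_iff (by linarith), one_div,
      Real.rpow_inv_lt_iff_of_pos (norm_nonneg _) (by linarith) (by positivity),
      Real.rpow_natCast] at hn
    exact hn.le
  have hlen : (lengthIter σ n a : ℂ) = ∑ b, (M ^ n) b a := by
    have := vecMul_map_pow_incidenceMatrix σ (fun _ => 1) n a
    simpa [lengthIter, Matrix.vecMul, dotProduct] using this.symm
  calc (lengthIter σ n a : ℝ) = ‖(lengthIter σ n a : ℂ)‖ := by simp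
    _ ≤ ∑ b, ‖(M ^ n) b a‖ := hlen ▸ norm_sum_le _ _
    _ ≤ ∑ _b : A, (α + ε) ^ n :=
        Finset.sum_le_sum fun b _ => (norm_apply_le_linfty_opNorm _ b a).trans hnorm
    _ = Fintype.card A * (α + ε) ^ n := by simp

theorem norm_le_of_eventually_lengthIter_le {μ : ℂ} (hμ : Module.End.HasEigenvalue
      (Matrix.toLin' ((incidenceMatrix σ).map Complex.ofReal)) μ) {C r : ℝ} (hr : 0 < r)
    (hgrowth : ∀ᶠ n in atTop, ∀ a, (lengthIter σ n a : ℝ) ≤ C * r ^ n) :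
    ‖μ‖ ≤ r := by
  obtain ⟨v, hv0, hv⟩ := (hasEigenvalue_toLin'_iff_exists_vecMul _ μ).mp hμ
  obtain ⟨a, ha⟩ := Function.ne_iff.mp hv0
  have hva : 0 < ‖v a‖ := norm_pos_iff.mpr ha
  refine le_of_eventually_pow_le_mul_pow hr (C := ‖v‖ * C / ‖v a‖) ?_
  filter_upwards [hgrowth] with n hn
  have hsum : μ ^ n * v a = ((iterWord σ n [a]).map v).sum := by
    rw [← vecMul_map_pow_incidenceMatrix, vecMul_pow_eq_pow_smul hv, Pi.smul_apply, smul_eq_mul]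
  have : ‖μ‖ ^ n * ‖v a‖ ≤ ‖v‖ * (C * r ^ n) :=
    calc ‖μ‖ ^ n * ‖v a‖ = ‖((iterWord σ n [a]).map v).sum‖ := by
          rw [← hsum, norm_mul, norm_pow]
      _ ≤ lengthIter σ n a * ‖v‖ := norm_sum_map_le v _
      _ ≤ ‖v‖ * (C * r ^ n) := by rw [mul_comm]; gcongr; exact hn a
  rw [div_mul_eq_mul_div, le_div_iff₀ hva, mul_assoc]
  exact this

end Growth

section Semiconj

variable {W B : Type*} {τ : W → List W} {σ : B → List B} {π : W → B}

theorem map_applyWord_of_semiconj (hπ : ∀ w, (τ w).map π = σ (π w)) (l : List W) :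
    (applyWord τ l).map π = applyWord σ (l.map π) := by
  simp only [applyWord, List.map_flatMap, List.flatMap_map, hπ]

theorem map_iterWord_of_semiconj (hπ : ∀ w, (τ w).map π = σ (π w)) (n : ℕ) (l : List W) :
    (iterWord τ n l).map π = iterWord σ n (l.map π) := by
  induction n with
  | zero => rfl
  | succ n ih => rw [iterWord_succ, iterWord_succ, map_applyWord_of_semiconj hπ, ih]

theorem lengthIter_of_semiconj (hπ : ∀ w, (τ w).map π = σ (π w)) (n : ℕ) (w : W) :
    lengthIter τ n w = lengthIter σ n (π w) := by
  rw [lengthIter, ← List.length_map π, map_iterWord_of_semiconj hπ]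
  rfl

theorem IsSubstitution.of_semiconj (hπ : ∀ w, (τ w).map π = σ (π w))
    (hσ : IsSubstitution σ) : IsSubstitution τ := fun w =>
  (hσ (π w)).congr fun n => (lengthIter_of_semiconj hπ n w).symm

variable [Fintype W] [DecidableEq W] [Fintype B] [DecidableEq B]

theorem vecMul_comp_incidenceMatrix_of_semiconj (hπ : ∀ w, (τ w).map π = σ (π w))
    (v : B → ℝ) : (v ∘ π) ᵥ* incidenceMatrix τ = (v ᵥ* incidenceMatrix σ) ∘ π := by
  ext w
  rw [Function.comp_apply, vecMul_incidenceMatrix, vecMul_incidenceMatrix, ← hπ, List.map_map]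

theorem hasEigenvalue_of_semiconj (hπ : ∀ w, (τ w).map π = σ (π w)) (hsurj : π.Surjective)
    {α : ℝ} (hα : Module.End.HasEigenvalue (Matrix.toLin' (incidenceMatrix σ)) α) :
    Module.End.HasEigenvalue (Matrix.toLin' (incidenceMatrix τ)) α := by
  obtain ⟨v, hv0, hv⟩ := (hasEigenvalue_toLin'_iff_exists_vecMul _ α).mp hα
  refine (hasEigenvalue_toLin'_iff_exists_vecMul _ α).mpr ⟨v ∘ π, ?_, ?_⟩
  · exact fun h => hv0 (hsurj.injective_comp_right h)
  · rw [vecMul_comp_incidenceMatrix_of_semiconj hπ, hv]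
    rfl

theorem IsDominantEigenvalue.of_semiconj (hπ : ∀ w, (τ w).map π = σ (π w))
    (hsurj : π.Surjective) {α : ℝ} (hα : IsDominantEigenvalue (incidenceMatrix σ) α) :
    IsDominantEigenvalue (incidenceMatrix τ) α := by
  obtain ⟨hα0, heig, hspec⟩ := hα
  refine ⟨hα0, hasEigenvalue_of_semiconj hπ hsurj heig, fun μ hμ => ?_⟩
  refine le_of_forall_pos_le_add fun ε hε => norm_le_of_eventually_lengthIter_le hμ
    (C := Fintype.card B) (by positivity) ?_
  filter_upwards [eventually_lengthIter_le hα0 hε hspec] with n hn w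
  rw [lengthIter_of_semiconj hπ]
  exact hn (π w)

end Semiconj

section FixedPoint

variable {B : Type*} (σ : B → List B) (y : ℕ → B)

/-- When `y` is a fixed point, `σ (y n)` occupies the positions `[imagePos n, imagePos (n + 1))`
of `y`. -/
def imagePos (n : ℕ) : ℕ := (applyWord σ (seqTake y n)).length

def window (k i : ℕ) : Fin k → B := fun j => y (i + j)

theorem seqTake_add (i k : ℕ) :
    seqTake y (i + k) = seqTake y i ++ List.ofFn (window y k i) := by
  rw [seqTake, List.ofFn_add]
  rfl

theorem seqTake_succ (n : ℕ) : seqTake y (n + 1) = seqTake y n ++ [y n] := by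
  rw [seqTake_add]
  simp [window]

theorem imagePos_succ (n : ℕ) : imagePos σ y (n + 1) = imagePos σ y n + (σ (y n)).length := by
  rw [imagePos, seqTake_succ, applyWord_append, List.length_append, applyWord_singleton]
  rfl

variable {σ y}

theorem IsFixedPoint.getElem?_applyWord_window (hy : IsFixedPoint σ y) {i k m : ℕ}
    (hm : m < (applyWord σ (List.ofFn (window y k i))).length) :
    (applyWord σ (List.ofFn (window y k i)))[m]? = some (y (imagePos σ y i + m)) := by
  have hlen : imagePos σ y i + m < (applyWord σ (seqTake y (i + k))).length := by
    rw [seqTake_add, applyWord_append, List.length_append]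
    exact Nat.add_lt_add_left hm _
  have hfix : (applyWord σ (seqTake y (i + k)))[imagePos σ y i + m]? =
      some (y (imagePos σ y i + m)) := by
    rw [List.getElem?_eq_getElem hlen]
    exact congrArg some (hy (i + k) ⟨_, hlen⟩)
  rwa [seqTake_add, applyWord_append, imagePos, List.getElem?_append_right (Nat.le_add_right _ _),
    Nat.add_sub_cancel_left] at hfix

theorem IsFixedPoint.getElem_eq (hy : IsFixedPoint σ y) {i t : ℕ} (ht : t < (σ (y i)).length) :
    (σ (y i))[t] = y (imagePos σ y i + t) := by
  have hone : applyWord σ (List.ofFn (window y 1 i)) = σ (y i) := by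
    simp [window, applyWord_singleton]
  have := hy.getElem?_applyWord_window (k := 1) (hone ▸ ht)
  rw [hone, List.getElem?_eq_getElem ht] at this
  exact Option.some_injective _ this

theorem lt_length_applyWord_window (hne : ∀ b, σ b ≠ []) {i k t : ℕ}
    (ht : t < (σ (y i)).length) (j : Fin k) :
    t + j < (applyWord σ (List.ofFn (window y k i))).length := by
  obtain ⟨k, rfl⟩ : ∃ k', k = k' + 1 := Nat.exists_eq_add_one_of_ne_zero (Fin.pos j).ne'
  have hrest :=
    length_le_length_applyWord hne (List.ofFn fun j : Fin k => window y (k + 1) i j.succ)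
  rw [List.ofFn_succ, applyWord, List.flatMap_cons, List.length_append]
  simp only [List.length_ofFn, applyWord, window, Fin.val_zero, add_zero] at hrest ⊢
  omega

theorem window_imagePos_add_eq (hne : ∀ b, σ b ≠ []) (hy : IsFixedPoint σ y) {i i' k t : ℕ}
    (hw : window y k i = window y k i') (ht : t < (σ (y i)).length) :
    window y k (imagePos σ y i + t) = window y k (imagePos σ y i' + t) := by
  funext j
  have hlt := lt_length_applyWord_window hne ht j
  have hi := hy.getElem?_applyWord_window hlt
  rw [hw] at hlt hi
  have hi' := hy.getElem?_applyWord_window hlt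
  simp only [window, add_assoc]
  exact Option.some_injective _ (hi.symm.trans hi')

end FixedPoint

section Factor

variable {B : Type*} {σ : B → List B} {y : ℕ → B} {k : ℕ}

abbrev Factor (y : ℕ → B) (k : ℕ) : Type _ := Set.range (window y k)

def factorAt (y : ℕ → B) (k i : ℕ) : Factor y k := ⟨window y k i, i, rfl⟩

noncomputable def Factor.pos (w : Factor y k) : ℕ := w.2.choose

theorem Factor.window_pos (w : Factor y k) : window y k w.pos = w.1 := w.2.choose_spec

theorem factorAt_pos (w : Factor y k) : factorAt y k w.pos = w := Subtype.ext w.window_pos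

def Factor.head (hk : 0 < k) (w : Factor y k) : B := w.1 ⟨0, hk⟩

theorem head_factorAt (hk : 0 < k) (i : ℕ) : (factorAt y k i).head hk = y i := by
  simp [Factor.head, factorAt, window]

theorem Factor.head_eq (hk : 0 < k) (w : Factor y k) : w.head hk = y w.pos := by
  rw [← factorAt_pos w, head_factorAt, factorAt_pos]

theorem head_surjective (hk : 0 < k) (hy : ∀ b, ∃ i, y i = b) :
    (Factor.head (y := y) hk).Surjective := fun b =>
  let ⟨i, hi⟩ := hy b
  ⟨factorAt y k i, (head_factorAt hk i).trans hi⟩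

variable (σ y k) in
/-- The image of a factor read off at one of its occurrences; by `window_imagePos_add_eq` the
choice of occurrence does not matter. -/
noncomputable def blockSubst (w : Factor y k) : List (Factor y k) :=
  List.ofFn fun t : Fin (σ (y w.pos)).length => factorAt y k (imagePos σ y w.pos + t)

theorem map_head_blockSubst (hy : IsFixedPoint σ y) (hk : 0 < k) (w : Factor y k) :
    (blockSubst σ y k w).map (Factor.head hk) = σ (w.head hk) := by
  rw [blockSubst, List.map_ofFn, Factor.head_eq]
  conv_rhs => rw [← List.ofFn_getElem (xs := σ (y w.pos))]
  exact congrArg List.ofFn (funext fun t => (head_factorAt hk _).trans (hy.getElem_eq t.2).symm)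

theorem blockSubst_factorAt (hk : 0 < k) (hne : ∀ b, σ b ≠ []) (hy : IsFixedPoint σ y)
    (i : ℕ) : blockSubst σ y k (factorAt y k i) =
      List.ofFn fun t : Fin (σ (y i)).length => factorAt y k (imagePos σ y i + t) := by
  have hw : window y k (factorAt y k i).pos = window y k i := (factorAt y k i).window_pos
  have hfirst : y (factorAt y k i).pos = y i := by
    simpa [window] using congrFun hw ⟨0, hk⟩
  apply List.ext_getElem (by simp [blockSubst, hfirst])
  intro t h _
  simp only [blockSubst, List.getElem_ofFn]
  exact Subtype.ext (window_imagePos_add_eq hne hy hw (by simpa [blockSubst] using h))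

theorem applyWord_blockSubst_seqTake (hk : 0 < k) (hne : ∀ b, σ b ≠ [])
    (hy : IsFixedPoint σ y) (n : ℕ) : applyWord (blockSubst σ y k) (seqTake (factorAt y k) n) =
      List.ofFn fun m : Fin (imagePos σ y n) => factorAt y k m := by
  induction n with
  | zero => rfl
  | succ n ih =>
    rw [seqTake_succ, applyWord_append, ih, applyWord_singleton, blockSubst_factorAt hk hne hy,
      imagePos_succ, List.ofFn_add]
    rfl

theorem isProperFixedPoint_blockSubst (hk : 0 < k) (hne : ∀ b, σ b ≠ [])
    (hy : IsFixedPoint σ y) : IsProperFixedPoint (blockSubst σ y k) (factorAt y k) := by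
  refine ⟨fun n => ?_, fun w => ⟨w.pos, factorAt_pos w⟩⟩
  rw [IsPrefixOfSeq, applyWord_blockSubst_seqTake hk hne hy]
  simp

end Factor

theorem stmt19_general {C : Type} (α : ℝ) (x : ℕ → C) (hx : IsSubstitutiveSeq α x)
    (u : List C) (hu : u ≠ []) :
    IsSubstitutiveSeq α (fun i : ℕ => if OccursAt u x i then (1 : Fin 2) else 0) := by
  obtain ⟨B, _, _, σ, y, φ, hσ, ⟨hfix, hproper⟩, hα, rfl⟩ := hx
  have hk : 0 < u.length := List.length_pos_iff.mpr hu
  have hhead := map_head_blockSubst hfix hk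
  refine ⟨Factor y u.length, inferInstance, inferInstance, blockSubst σ y u.length,
    factorAt y u.length, fun w => if ∀ j, u.get j = φ (w.1 j) then 1 else 0,
    hσ.of_semiconj hhead, isProperFixedPoint_blockSubst hk hσ.ne_nil hfix,
    hα.of_semiconj hhead (head_surjective hk hproper), ?_⟩
  funext i
  exact if_congr Iff.rfl rfl rfl

/-- the characteristic sequence of the occurrences of a word in an
α-substitutive sequence is α-substitutive. -/
theorem stmt19 {C : Type} [Fintype C] (α : ℝ) (x : ℕ → C) (hx : IsSubstitutiveSeq α x)
    (u : List C) (hu : u ≠ []) :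
    IsSubstitutiveSeq α (fun i : ℕ => if OccursAt u x i then (1 : Fin 2) else 0) :=
  stmt19_general α x hx u hu

end Cobham
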